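/- arXiv:2308.00768 — 6 statements merged into one kernel-verified Lean document; each statement's English description precedes it below -/
import Mathlib

section
/- (Proposition 1) Fix integers K ≥ 1 and U with 1 ≤ U ≤ K. There exist functions M : ℕ → ℝ → ℝ and L : ℕ → ℝ such that: (i) for every n ≥ 1 and every α₁ > 0, Pr(K⁺ = U | K, n, α₁, α₂) tends to M n α₁ as α₂ → 0⁺; (ii) for every n ≥ 1, M n α₁ tends to L n as α₁ → ∞; and (iii) L n tends to 1 as n → ∞. That is, the iterated limit lim_{n→∞} lim_{α₁→∞} lim_{α₂→0⁺} Pr(K⁺ = U | K, n, α₁, α₂) equals 1. -/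
open Filter Topology Finset

/-- Number of indices `i` with `z i = k`. -/
def nk {n K : ℕ} (z : Fin n → Fin K) (k : Fin K) : ℕ :=
  (Finset.univ.filter (fun i => z i = k)).card

/-- Number of occupied components (distinct values taken by `z`). -/
def Kplus {n K : ℕ} (z : Fin n → Fin K) : ℕ :=
  (Finset.univ.image z).card

/-- Marginal allocation probability under an asymmetric Dirichlet(α₁ on first U
coordinates, α₂ on the rest) prior on the mixture weights. -/
noncomputable def pz (K U n : ℕ) (α₁ α₂ : ℝ) (z : Fin n → Fin K) : ℝ :=
  (Real.Gamma ((U : ℝ) * α₁ + ((K : ℝ) - (U : ℝ)) * α₂) /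
      Real.Gamma ((U : ℝ) * α₁ + ((K : ℝ) - (U : ℝ)) * α₂ + (n : ℝ))) *
    ∏ k : Fin K,
      Real.Gamma ((if (k : ℕ) < U then α₁ else α₂) + (nk z k : ℝ)) /
        Real.Gamma (if (k : ℕ) < U then α₁ else α₂)

/-- Prior probability that the number of occupied components equals `u`. -/
noncomputable def prKplus (K U n : ℕ) (α₁ α₂ : ℝ) (u : ℕ) : ℝ :=
  ∑ z ∈ Finset.univ.filter (fun z : Fin n → Fin K => Kplus z = u),
    pz K U n α₁ α₂ z

/-!
For positive parameters `Γ(x + m) / Γ(x)` is the rising factorial `x^(m)`, so `p(z)` is a ratio of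
polynomials in `(α₁, α₂)` whose denominator stays positive at `α₂ = 0`; the limit `α₂ → 0⁺` is
obtained by setting `α₂ = 0`. That limit vanishes unless `z` only uses the first `U` components, and
for such `z` it is `∏ₖ α₁^(n_k) / (U α₁)^(n)`, which tends to `U⁻ⁿ` as `α₁ → ∞`. So the iterated
limit is the proportion of maps from `n` points to the first `U` components that are onto, which is
at least `1 - U (1 - 1/U)ⁿ` by a union bound over the component that is missed.
-/

open Polynomial

theorem Real.Gamma_add_nat_div_Gamma {x : ℝ} (hx : ∀ j : ℕ, x ≠ -j) (m : ℕ) :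
    Real.Gamma (x + m) / Real.Gamma x = (ascPochhammer ℝ m).eval x := by
  induction m with
  | zero => simp [div_self (Real.Gamma_ne_zero hx)]
  | succ m ih =>
    have hxm : x + m ≠ 0 := fun h => hx m (eq_neg_of_add_eq_zero_left h)
    rw [Nat.cast_succ, ← add_assoc, Real.Gamma_add_one hxm, mul_div_assoc, ih,
      ascPochhammer_succ_right, eval_mul, eval_add, eval_X, eval_natCast, mul_comm]

theorem tendsto_ascPochhammer_eval_mul_div_pow (c : ℝ) (m : ℕ) :
    Tendsto (fun a : ℝ => (ascPochhammer ℝ m).eval (c * a) / a ^ m) atTop (𝓝 (c ^ m)) := by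
  induction m with
  | zero => simp
  | succ m ih =>
    have hlin : Tendsto (fun a : ℝ => (c * a + m) / a) atTop (𝓝 c) := by
      have h := (tendsto_const_nhds (x := c)).add
        ((tendsto_const_nhds (x := (m : ℝ))).div_atTop tendsto_id)
      rw [add_zero] at h
      refine h.congr' ?_
      filter_upwards [eventually_ne_atTop 0] with a ha
      simp only [id, add_div, mul_div_assoc, div_self ha, mul_one]
    refine (ih.mul hlin).congr' ?_
    filter_upwards [eventually_ne_atTop 0] with a ha
    rw [ascPochhammer_succ_right, eval_mul, eval_add, eval_X, eval_natCast, pow_succ,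
      mul_div_mul_comm]

section Covering

variable {β : Type*} [DecidableEq β]

lemma card_filter_not_subset_image_le {α : Type*} [Fintype α] [DecidableEq α] (T : Finset β) :
    #{f ∈ Fintype.piFinset (fun _ : α => T) | ¬ T ⊆ univ.image f} ≤
      #T * (#T - 1) ^ Fintype.card α := by
  have hcover : {f ∈ Fintype.piFinset (fun _ : α => T) | ¬ T ⊆ univ.image f} ⊆
      T.biUnion fun b => Fintype.piFinset fun _ => T.erase b := by
    intro f hf
    simp only [mem_filter, Fintype.mem_piFinset, not_subset, mem_image, mem_univ, true_and,
      not_exists] at hf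
    obtain ⟨hfT, b, hbT, hb⟩ := hf
    exact mem_biUnion.2 ⟨b, hbT, Fintype.mem_piFinset.2 fun a => mem_erase.2 ⟨hb a, hfT a⟩⟩
  calc _ ≤ _ := card_le_card hcover
    _ ≤ ∑ b ∈ T, #(Fintype.piFinset fun _ : α => T.erase b) := card_biUnion_le
    _ = ∑ _b ∈ T, (#T - 1) ^ Fintype.card α := sum_congr rfl fun b hb => by
      simp [card_erase_of_mem hb]
    _ = _ := by rw [sum_const, smul_eq_mul]

lemma tendsto_card_filter_subset_image_div_pow (T : Finset β) (hT : T.Nonempty) :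
    Tendsto (fun n : ℕ =>
      (#{f ∈ Fintype.piFinset (fun _ : Fin n => T) | T ⊆ univ.image f} : ℝ) / (#T : ℝ) ^ n)
      atTop (𝓝 1) := by
  have ht : (1 : ℝ) ≤ #T := by exact_mod_cast hT.card_pos
  have hsplit (n : ℕ) :
      (#{f ∈ Fintype.piFinset (fun _ : Fin n => T) | T ⊆ univ.image f} : ℝ) / (#T : ℝ) ^ n =
        1 - #{f ∈ Fintype.piFinset (fun _ : Fin n => T) | ¬ T ⊆ univ.image f} / (#T : ℝ) ^ n := by
    have h := card_filter_add_card_filter_not (s := Fintype.piFinset fun _ : Fin n => T)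
      (T ⊆ univ.image ·)
    rw [Fintype.card_piFinset_const] at h
    rw [eq_sub_iff_add_eq, ← add_div, ← Nat.cast_add, h, Nat.cast_pow, div_self (by positivity)]
  have hbound (n : ℕ) :
      (#{f ∈ Fintype.piFinset (fun _ : Fin n => T) | ¬ T ⊆ univ.image f} : ℝ) / (#T : ℝ) ^ n ≤
        #T * ((#T - 1) / #T) ^ n := by
    have h := card_filter_not_subset_image_le (α := Fin n) T
    rw [Fintype.card_fin] at h
    rw [div_pow, mul_div_assoc', div_le_div_iff_of_pos_right (by positivity)]
    calc _ ≤ ((#T * (#T - 1) ^ n : ℕ) : ℝ) := by exact_mod_cast h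
      _ = _ := by push_cast [Nat.cast_sub hT.card_pos]; rfl
  have hgeom : Tendsto (fun n : ℕ => (#T : ℝ) * ((#T - 1) / #T) ^ n) atTop (𝓝 0) := by
    simpa using (tendsto_pow_atTop_nhds_zero_of_lt_one (by bound)
      (by rw [div_lt_one (by positivity)]; linarith)).const_mul (#T : ℝ)
  simpa [hsplit] using
    tendsto_const_nhds.sub (squeeze_zero (fun n => by positivity) hbound hgeom)

end Covering

-- Unlike `pz`, this is meaningful at `α₂ = 0`, where `pz` involves the junk value `Γ 0 = 0`.
noncomputable def pzPoch (K U n : ℕ) (a b : ℝ) (z : Fin n → Fin K) : ℝ :=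
  (∏ k : Fin K, (ascPochhammer ℝ (nk z k)).eval (if (k : ℕ) < U then a else b)) /
    (ascPochhammer ℝ n).eval ((U : ℝ) * a + ((K : ℝ) - U) * b)

section Allocation

variable {K U n : ℕ}

lemma sum_nk (z : Fin n → Fin K) : ∑ k, nk z k = n := by
  simpa [nk] using (card_eq_sum_card_fiberwise (f := z) (s := univ) (t := univ) (by simp)).symm

lemma pz_eq_pzPoch (hU : 0 < U) (hUK : U ≤ K) {a b : ℝ} (ha : 0 < a) (hb : 0 < b)
    (z : Fin n → Fin K) : pz K U n a b z = pzPoch K U n a b z := by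
  have hGamma {x : ℝ} (hx : 0 < x) (m : ℕ) :
      Real.Gamma (x + m) / Real.Gamma x = (ascPochhammer ℝ m).eval x :=
    Real.Gamma_add_nat_div_Gamma (fun j => by linarith [(j.cast_nonneg : (0 : ℝ) ≤ j)]) m
  have hA : 0 < (U : ℝ) * a + ((K : ℝ) - U) * b := by
    have : (U : ℝ) ≤ K := by exact_mod_cast hUK
    have : (0 : ℝ) < U := by exact_mod_cast hU
    positivity
  rw [pz, pzPoch, ← inv_div, hGamma hA, div_eq_inv_mul]
  congr 1
  refine prod_congr rfl fun k _ => hGamma ?_ _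
  split_ifs <;> assumption

lemma tendsto_pzPoch_nhds_zero (hU : 0 < U) {a : ℝ} (ha : 0 < a) (z : Fin n → Fin K) :
    Tendsto (fun b => pzPoch K U n a b z) (𝓝 0) (𝓝 (pzPoch K U n a 0 z)) := by
  have hnum : Continuous fun b : ℝ =>
      ∏ k : Fin K, (ascPochhammer ℝ (nk z k)).eval (if (k : ℕ) < U then a else b) :=
    continuous_finsetProd _ fun k _ =>
      (Polynomial.continuous _).comp (continuous_const.if_const _ continuous_id)
  have hden : (ascPochhammer ℝ n).eval ((U : ℝ) * a + ((K : ℝ) - U) * 0) ≠ 0 :=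
    (ascPochhammer_pos n _ (by simp; positivity)).ne'
  exact (hnum.tendsto 0).div (Continuous.tendsto (by fun_prop) 0) hden

lemma pzPoch_eq_zero_of_le {z : Fin n → Fin K} {i : Fin n} (hi : U ≤ z i) (a : ℝ) :
    pzPoch K U n a 0 z = 0 := by
  have hpos : 0 < nk z (z i) := card_pos.2 ⟨i, by simp⟩
  rw [pzPoch, prod_eq_zero (mem_univ (z i)), zero_div]
  rw [if_neg hi.not_gt, ascPochhammer_eval_zero, if_neg hpos.ne']

lemma tendsto_pzPoch_atTop (hU : 0 < U) {z : Fin n → Fin K} (hz : ∀ i, (z i : ℕ) < U) :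
    Tendsto (fun a => pzPoch K U n a 0 z) atTop (𝓝 ((U : ℝ) ^ n)⁻¹) := by
  have hnum : Tendsto (fun a : ℝ => ∏ k : Fin K, (ascPochhammer ℝ (nk z k)).eval a / a ^ nk z k)
      atTop (𝓝 1) := by
    simpa using tendsto_finsetProd univ fun k _ =>
      tendsto_ascPochhammer_eval_mul_div_pow 1 (nk z k)
  have hden := tendsto_ascPochhammer_eval_mul_div_pow U n
  refine one_div ((U : ℝ) ^ n) ▸ (hnum.div hden (by positivity)).congr' ?_
  filter_upwards [eventually_ne_atTop 0] with a ha
  have hfactor (k : Fin K) : (ascPochhammer ℝ (nk z k)).eval (if (k : ℕ) < U then a else 0) =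
      (ascPochhammer ℝ (nk z k)).eval a := by
    split_ifs with hk
    · rfl
    · have : nk z k = 0 := card_eq_zero.2 (filter_eq_empty_iff.2 fun i _ h => hk (h ▸ hz i))
      simp [this]
  rw [Pi.div_apply, prod_div_distrib, prod_pow_eq_pow_sum, sum_nk,
    div_div_div_cancel_right₀ (pow_ne_zero n ha), pzPoch, prod_congr rfl fun k _ => hfactor k]
  simp

lemma tendsto_prKplus_nhdsGT_zero (hU : 0 < U) (hUK : U ≤ K) {a : ℝ} (ha : 0 < a) (u : ℕ) :
    Tendsto (fun b => prKplus K U n a b u) (𝓝[>] 0)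
      (𝓝 (∑ z ∈ {z : Fin n → Fin K | Kplus z = u}, pzPoch K U n a 0 z)) := by
  refine (tendsto_finsetSum _ fun z _ =>
    (tendsto_pzPoch_nhds_zero hU ha z).mono_left nhdsWithin_le_nhds).congr' ?_
  filter_upwards [self_mem_nhdsWithin] with b hb
  exact sum_congr rfl fun z _ => (pz_eq_pzPoch hU hUK ha hb z).symm

lemma tendsto_sum_pzPoch_atTop (hU : 0 < U) (s : Finset (Fin n → Fin K)) :
    Tendsto (fun a => ∑ z ∈ s, pzPoch K U n a 0 z) atTop
      (𝓝 (#{z ∈ s | ∀ i, (z i : ℕ) < U} / (U : ℝ) ^ n)) := by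
  have hsupp (a : ℝ) : ∑ z ∈ s, pzPoch K U n a 0 z =
      ∑ z ∈ s with ∀ i, (z i : ℕ) < U, pzPoch K U n a 0 z := by
    refine (sum_filter_of_ne fun z _ hz => ?_).symm
    by_contra! hbad
    obtain ⟨i, hi⟩ := hbad
    exact hz (pzPoch_eq_zero_of_le hi a)
  simp only [hsupp, div_eq_mul_inv]
  simpa using tendsto_finsetSum (f := fun z a => pzPoch K U n a 0 z)
    {z ∈ s | ∀ i, (z i : ℕ) < U} fun z hz => tendsto_pzPoch_atTop hU (mem_filter.1 hz).2

lemma filter_lt_filter_Kplus_eq (hUK : U ≤ K) :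
    ({z ∈ {z : Fin n → Fin K | Kplus z = U} | ∀ i, (z i : ℕ) < U} : Finset (Fin n → Fin K)) =
      {z ∈ Fintype.piFinset (fun _ : Fin n => ({k | (k : ℕ) < U} : Finset (Fin K))) |
        ({k | (k : ℕ) < U} : Finset (Fin K)) ⊆ univ.image z} := by
  have hcard : #({k | (k : ℕ) < U} : Finset (Fin K)) = U := by
    rw [Fin.card_filter_val_lt, min_eq_right hUK]
  ext z
  simp only [filter_filter, mem_filter, mem_univ, true_and, Fintype.mem_piFinset]
  rw [and_comm]
  refine and_congr_right fun hz => ?_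
  have himg : univ.image z ⊆ ({k | (k : ℕ) < U} : Finset (Fin K)) := by
    intro k hk
    obtain ⟨i, -, rfl⟩ := mem_image.1 hk
    simpa using hz i
  exact ⟨fun h => (eq_of_subset_of_card_le himg (by rw [hcard, ← h, Kplus])).symm.subset,
    fun h => by rw [Kplus, subset_antisymm himg h, hcard]⟩

end Allocation

theorem stmt_0_general (K U : ℕ) (hU1 : 1 ≤ U) (hUK : U ≤ K) :
    ∃ (M : ℕ → ℝ → ℝ) (L : ℕ → ℝ),
      (∀ n, 1 ≤ n → ∀ α₁ : ℝ, 0 < α₁ →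
        Tendsto (fun α₂ : ℝ => prKplus K U n α₁ α₂ U) (𝓝[>] 0) (𝓝 (M n α₁))) ∧
      (∀ n, 1 ≤ n → Tendsto (fun α₁ : ℝ => M n α₁) atTop (𝓝 (L n))) ∧
      Tendsto L atTop (𝓝 1) := by
  refine ⟨fun n a => ∑ z ∈ {z : Fin n → Fin K | Kplus z = U}, pzPoch K U n a 0 z,
    fun n => #{z ∈ {z : Fin n → Fin K | Kplus z = U} | ∀ i, (z i : ℕ) < U} / (U : ℝ) ^ n,
    fun n _ a ha => tendsto_prKplus_nhdsGT_zero hU1 hUK ha U,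
    fun n _ => tendsto_sum_pzPoch_atTop hU1 _, ?_⟩
  have hT : ({k | (k : ℕ) < U} : Finset (Fin K)).Nonempty :=
    ⟨⟨0, by omega⟩, mem_filter.2 ⟨mem_univ _, hU1⟩⟩
  simpa [← filter_lt_filter_Kplus_eq hUK, Fin.card_filter_val_lt, min_eq_right hUK] using
    tendsto_card_filter_subset_image_div_pow _ hT

theorem stmt_0 (K U : ℕ) (hK : 1 ≤ K) (hU1 : 1 ≤ U) (hUK : U ≤ K) :
    ∃ (M : ℕ → ℝ → ℝ) (L : ℕ → ℝ),
      (∀ n, 1 ≤ n → ∀ α₁ : ℝ, 0 < α₁ →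
        Tendsto (fun α₂ : ℝ => prKplus K U n α₁ α₂ U) (𝓝[>] 0) (𝓝 (M n α₁))) ∧
      (∀ n, 1 ≤ n → Tendsto (fun α₁ : ℝ => M n α₁) atTop (𝓝 (L n))) ∧
      Tendsto L atTop (𝓝 1) :=
  stmt_0_general K U hU1 hUK
end

section
/- For every K ≥ 1, every U with 1 ≤ U ≤ K, every n ≥ 1 and every α₁ > 0, Pr(K⁺ = U | K, n, α₁, α₂) tends, as α₂ → 0⁺, to Σ_{z : Fin n → Fin U, z surjective} (Γ(U·α₁)/Γ(U·α₁ + n)) · ∏_{k ∈ Fin U} Γ(α₁ + n_k(z))/Γ(α₁), where the sum ranges over all surjective functions z : Fin n → Fin U and n_k(z) is the number of indices i with z i = k. -/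
open Filter Topology Finset

lemma gammaContinuousAt {s : ℝ} (hs : 0 < s) : ContinuousAt Real.Gamma s := by
  refine (Real.differentiableAt_Gamma ?_).continuousAt
  intro m h
  have : (0:ℝ) ≤ m := Nat.cast_nonneg m
  nlinarith [h ▸ hs]

lemma tendsto_add_const_nhdsWithin (c : ℝ) :
    Tendsto (fun x : ℝ => x + c) (𝓝[>] (0:ℝ)) (𝓝 c) := by
  have : Tendsto (fun x : ℝ => x + c) (𝓝 0) (𝓝 (0 + c)) :=
    (continuous_id.add continuous_const).tendsto 0
  simpa using tendsto_nhdsWithin_of_tendsto_nhds this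

lemma gamma_ratio_tendsto_zero (m : ℕ) (hm : 1 ≤ m) :
    Tendsto (fun x : ℝ => Real.Gamma (x + m) / Real.Gamma x) (𝓝[>] (0:ℝ)) (𝓝 0) := by
  have h1 : Tendsto (fun x : ℝ => Real.Gamma (x + m) * x / Real.Gamma (x + 1))
      (𝓝[>] (0:ℝ)) (𝓝 0) := by
    have ha : Tendsto (fun x : ℝ => Real.Gamma (x + m)) (𝓝[>] (0:ℝ)) (𝓝 (Real.Gamma m)) :=
      (gammaContinuousAt (by exact_mod_cast hm)).tendsto.comp (tendsto_add_const_nhdsWithin m)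
    have hb : Tendsto (fun x : ℝ => x) (𝓝[>] (0:ℝ)) (𝓝 0) :=
      tendsto_nhdsWithin_of_tendsto_nhds tendsto_id
    have hc : Tendsto (fun x : ℝ => Real.Gamma (x + 1)) (𝓝[>] (0:ℝ)) (𝓝 1) := by
      simpa [Real.Gamma_one, Function.comp_def] using
        (gammaContinuousAt one_pos).tendsto.comp (tendsto_add_const_nhdsWithin 1)
    simpa [Pi.div_def] using (ha.mul hb).div hc one_ne_zero
  refine h1.congr' ?_
  filter_upwards [self_mem_nhdsWithin] with x (hx : 0 < x)
  rw [Real.Gamma_add_one hx.ne']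
  have h0 : Real.Gamma x ≠ 0 := (Real.Gamma_pos_of_pos hx).ne'
  field_simp

open scoped Classical in
theorem stmt_1 (K U n : ℕ) (hK : 1 ≤ K) (hU1 : 1 ≤ U) (hUK : U ≤ K)
    (hn : 1 ≤ n) (α₁ : ℝ) (hα₁ : 0 < α₁) :
    Tendsto (fun α₂ : ℝ => prKplus K U n α₁ α₂ U) (𝓝[>] 0)
      (𝓝 (∑ z ∈ Finset.univ.filter
            (fun z : Fin n → Fin U => Function.Surjective z),
          (Real.Gamma ((U : ℝ) * α₁) / Real.Gamma ((U : ℝ) * α₁ + (n : ℝ))) *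
            ∏ k : Fin U, Real.Gamma (α₁ + (nk z k : ℝ)) / Real.Gamma α₁)) := by
  have hUA : 0 < (U : ℝ) * α₁ := by
    have : (1:ℝ) ≤ (U:ℝ) := by exact_mod_cast hU1
    nlinarith
  set C : ℝ := Real.Gamma ((U : ℝ) * α₁) / Real.Gamma ((U : ℝ) * α₁ + (n : ℝ)) with hC
  set ℓ : (Fin n → Fin K) → Fin K → ℝ := fun z k =>
    if (k : ℕ) < U then Real.Gamma (α₁ + (nk z k : ℝ)) / Real.Gamma α₁
    else if nk z k = 0 then 1 else 0 with hℓ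
  -- Step A: termwise limit
  have stepA : ∀ z : Fin n → Fin K,
      Tendsto (fun α₂ : ℝ => pz K U n α₁ α₂ z) (𝓝[>] (0:ℝ)) (𝓝 (C * ∏ k, ℓ z k)) := by
    intro z
    have hlin : Tendsto (fun α₂ : ℝ => (U : ℝ) * α₁ + ((K : ℝ) - (U : ℝ)) * α₂)
        (𝓝[>] (0:ℝ)) (𝓝 ((U : ℝ) * α₁)) := by
      have : Tendsto (fun α₂ : ℝ => (U : ℝ) * α₁ + ((K : ℝ) - (U : ℝ)) * α₂)
          (𝓝 0) (𝓝 ((U:ℝ) * α₁ + ((K:ℝ) - (U:ℝ)) * 0)) :=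
        (continuous_const.add (continuous_const.mul continuous_id)).tendsto 0
      simpa using tendsto_nhdsWithin_of_tendsto_nhds this
    have hpref : Tendsto (fun α₂ : ℝ =>
        Real.Gamma ((U : ℝ) * α₁ + ((K : ℝ) - (U : ℝ)) * α₂) /
          Real.Gamma ((U : ℝ) * α₁ + ((K : ℝ) - (U : ℝ)) * α₂ + (n : ℝ)))
        (𝓝[>] (0:ℝ)) (𝓝 C) := by
      have h1 : Tendsto (fun α₂ : ℝ => Real.Gamma ((U : ℝ) * α₁ + ((K : ℝ) - (U : ℝ)) * α₂))
          (𝓝[>] (0:ℝ)) (𝓝 (Real.Gamma ((U:ℝ) * α₁))) :=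
        (gammaContinuousAt hUA).tendsto.comp hlin
      have h2 : Tendsto (fun α₂ : ℝ =>
          Real.Gamma ((U : ℝ) * α₁ + ((K : ℝ) - (U : ℝ)) * α₂ + (n : ℝ)))
          (𝓝[>] (0:ℝ)) (𝓝 (Real.Gamma ((U:ℝ) * α₁ + n))) := by
        have hpos : 0 < (U:ℝ) * α₁ + n := by positivity
        have hl2 : Tendsto (fun α₂ : ℝ => (U : ℝ) * α₁ + ((K : ℝ) - (U : ℝ)) * α₂ + (n:ℝ))
            (𝓝[>] (0:ℝ)) (𝓝 ((U:ℝ) * α₁ + n)) := by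
          exact (hlin.add_const _)
        exact (gammaContinuousAt hpos).tendsto.comp hl2
      exact h1.div h2 (Real.Gamma_pos_of_pos (by positivity)).ne'
    have hfac : ∀ k : Fin K, Tendsto (fun α₂ : ℝ =>
        Real.Gamma ((if (k : ℕ) < U then α₁ else α₂) + (nk z k : ℝ)) /
          Real.Gamma (if (k : ℕ) < U then α₁ else α₂)) (𝓝[>] (0:ℝ)) (𝓝 (ℓ z k)) := by
      intro k
      by_cases hk : (k : ℕ) < U
      · simp only [hℓ, hk, if_true]
        exact tendsto_const_nhds
      · simp only [hℓ, hk, if_false]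
        by_cases h0 : nk z k = 0
        · simp only [h0, if_true, Nat.cast_zero, add_zero]
          refine tendsto_const_nhds.congr' ?_
          filter_upwards [self_mem_nhdsWithin] with x (hx : 0 < x)
          rw [div_self (Real.Gamma_pos_of_pos hx).ne']
        · simp only [h0, if_false]
          exact gamma_ratio_tendsto_zero (nk z k) (Nat.one_le_iff_ne_zero.mpr h0)
    have hprod : Tendsto (fun α₂ : ℝ => ∏ k : Fin K,
        Real.Gamma ((if (k : ℕ) < U then α₁ else α₂) + (nk z k : ℝ)) /
          Real.Gamma (if (k : ℕ) < U then α₁ else α₂)) (𝓝[>] (0:ℝ)) (𝓝 (∏ k, ℓ z k)) :=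
      tendsto_finset_prod _ (fun k _ => hfac k)
    exact hpref.mul hprod
  -- the sum converges termwise
  have hsum : Tendsto (fun α₂ : ℝ => prKplus K U n α₁ α₂ U) (𝓝[>] (0:ℝ))
      (𝓝 (∑ z ∈ Finset.univ.filter (fun z : Fin n → Fin K => Kplus z = U),
        C * ∏ k, ℓ z k)) := by
    have := tendsto_finset_sum
      (Finset.univ.filter (fun z : Fin n → Fin K => Kplus z = U))
      (fun z _ => stepA z)
    simpa [prKplus] using this
  -- Step B: identify the limit
  have stepB : (∑ z ∈ Finset.univ.filter (fun z : Fin n → Fin K => Kplus z = U),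
        C * ∏ k, ℓ z k) =
      ∑ z ∈ Finset.univ.filter (fun z : Fin n → Fin U => Function.Surjective z),
        C * ∏ k : Fin U, Real.Gamma (α₁ + (nk z k : ℝ)) / Real.Gamma α₁ := by
    -- restrict to allocations using only the first U components
    have hrestrict : (∑ z ∈ Finset.univ.filter (fun z : Fin n → Fin K => Kplus z = U),
        C * ∏ k, ℓ z k) =
        ∑ z ∈ Finset.univ.filter
          (fun z : Fin n → Fin K => Kplus z = U ∧ ∀ i, (z i : ℕ) < U),
          C * ∏ k, ℓ z k := by
      symm
      refine Finset.sum_subset ?_ ?_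
      · intro z hz
        simp only [Finset.mem_filter, Finset.mem_univ, true_and] at hz ⊢
        exact hz.1
      · intro z hz hz'
        simp only [Finset.mem_filter, Finset.mem_univ, true_and] at hz hz'
        push_neg at hz'
        obtain ⟨i, hi⟩ := hz' hz
        have hnk : nk z (z i) ≠ 0 := by
          have hmem : i ∈ Finset.univ.filter (fun j => z j = z i) := by simp
          have := Finset.card_pos.mpr ⟨i, hmem⟩
          simp only [nk]
          omega
        have hzero : ℓ z (z i) = 0 := by
          have h1 : ¬ ((z i : ℕ) < U) := not_lt.mpr hi
          simp [hℓ, h1, hnk]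
        rw [Finset.prod_eq_zero (Finset.mem_univ (z i)) hzero, mul_zero]
    rw [hrestrict]
    -- bijection with surjections onto Fin U
    refine Finset.sum_nbij'
      (i := fun z : Fin n → Fin K => fun i : Fin n =>
        (⟨min (z i : ℕ) (U - 1), by omega⟩ : Fin U))
      (j := fun w : Fin n → Fin U => fun i : Fin n => Fin.castLE hUK (w i))
      ?_ ?_ ?_ ?_ ?_
    · -- maps into surjections
      intro z hz
      simp only [Finset.mem_filter, Finset.mem_univ, true_and] at hz ⊢
      obtain ⟨hKp, hlt⟩ := hz
      set w : Fin n → Fin U := fun i : Fin n => (⟨min (z i : ℕ) (U - 1), by omega⟩ : Fin U)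
        with hw
      have hzw : z = fun i => Fin.castLE hUK (w i) := by
        funext i
        have := hlt i
        exact Fin.ext (by simp [hw, Fin.castLE]; omega)
      have himg : (Finset.univ.image z) = (Finset.univ.image w).image (Fin.castLE hUK) := by
        rw [hzw, Finset.image_image]
        rfl
      have hcard : (Finset.univ.image w).card = U := by
        have : (Finset.univ.image z).card = U := hKp
        rw [himg, Finset.card_image_of_injective _ (Fin.castLE_injective hUK)] at this
        exact this
      have huniv : (Finset.univ.image w) = Finset.univ := by
        apply Finset.eq_univ_of_card
        simpa using hcard
      intro k
      have : k ∈ Finset.univ.image w := huniv ▸ Finset.mem_univ k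
      obtain ⟨i, _, hik⟩ := Finset.mem_image.mp this
      exact ⟨i, hik⟩
    · -- inverse maps into the filtered set
      intro w hw
      simp only [Finset.mem_filter, Finset.mem_univ, true_and] at hw ⊢
      constructor
      · have himg : (Finset.univ.image (fun i => Fin.castLE hUK (w i)))
            = (Finset.univ.image w).image (Fin.castLE hUK) := by
          rw [Finset.image_image]
          rfl
        have huniv : Finset.univ.image w = Finset.univ :=
          Finset.image_univ_of_surjective hw
        simp only [Kplus, himg, huniv,
          Finset.card_image_of_injective _ (Fin.castLE_injective hUK)]
        simp
      · intro i
        exact (w i).isLt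
    · -- left inverse
      intro z hz
      simp only [Finset.mem_filter, Finset.mem_univ, true_and] at hz
      funext i
      have := hz.2 i
      exact Fin.ext (by simp [Fin.castLE]; omega)
    · -- right inverse
      intro w hw
      funext i
      have := (w i).isLt
      exact Fin.ext (by simp [Fin.castLE]; omega)
    · -- values agree
      intro z hz
      simp only [Finset.mem_filter, Finset.mem_univ, true_and] at hz
      obtain ⟨hKp, hlt⟩ := hz
      congr 1
      set w : Fin n → Fin U := fun i : Fin n => (⟨min (z i : ℕ) (U - 1), by omega⟩ : Fin U)
        with hw
      have hval : ∀ i, ((w i : ℕ)) = (z i : ℕ) := by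
        intro i
        have := hlt i
        simp [hw]; omega
      have hnk1 : ∀ k : Fin U, nk z (Fin.castLE hUK k) = nk w k := by
        intro k
        unfold nk
        congr 1
        apply Finset.filter_congr
        intro i _
        constructor
        · intro h
          exact Fin.ext (by rw [hval i]; exact congrArg Fin.val h)
        · intro h
          exact Fin.ext (by rw [← hval i]; exact congrArg Fin.val h)
      have hnk0 : ∀ k : Fin K, ¬ ((k : ℕ) < U) → nk z k = 0 := by
        intro k hk
        unfold nk
        rw [Finset.card_eq_zero, Finset.filter_eq_empty_iff]
        intro i _
        intro h
        have := hlt i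
        rw [h] at this
        omega
      calc ∏ k : Fin K, ℓ z k
          = ∏ k : Fin K, (if (k : ℕ) < U then
              Real.Gamma (α₁ + (nk z k : ℝ)) / Real.Gamma α₁ else 1) := by
            apply Finset.prod_congr rfl
            intro k _
            by_cases hk : (k : ℕ) < U
            · simp [hℓ, hk]
            · simp [hℓ, hk, hnk0 k hk]
        _ = ∏ k ∈ Finset.univ.filter (fun k : Fin K => (k : ℕ) < U),
              Real.Gamma (α₁ + (nk z k : ℝ)) / Real.Gamma α₁ := by
            rw [Finset.prod_filter]
        _ = ∏ k : Fin U, Real.Gamma (α₁ + (nk w k : ℝ)) / Real.Gamma α₁ := by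
            refine Finset.prod_nbij'
              (i := fun k : Fin K => (⟨min (k : ℕ) (U - 1), by omega⟩ : Fin U))
              (j := fun k : Fin U => Fin.castLE hUK k) ?_ ?_ ?_ ?_ ?_
            · intro k _; exact Finset.mem_univ _
            · intro k _
              simp only [Finset.mem_filter, Finset.mem_univ, true_and]
              exact (k).isLt
            · intro k hk
              simp only [Finset.mem_filter, Finset.mem_univ, true_and] at hk
              exact Fin.ext (by simp [Fin.castLE]; omega)
            · intro k _
              have := (k).isLt
              exact Fin.ext (by simp [Fin.castLE]; omega)
            · intro k hk
              simp only [Finset.mem_filter, Finset.mem_univ, true_and] at hk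
              have hcast : Fin.castLE hUK (⟨min (k : ℕ) (U - 1), by omega⟩ : Fin U) = k :=
                Fin.ext (by simp [Fin.castLE]; omega)
              rw [← hnk1, hcast]
  rw [← stepB]
  exact hsum
end

section
/- Fix K ≥ 1, 1 ≤ U ≤ K, n ≥ 1, α₁ > 0 and an allocation z : Fin n → Fin K. If there exists an index i with (z i : ℕ) ≥ U, then p(z) tends to 0 as α₂ → 0⁺. If instead (z i : ℕ) < U for every i, then p(z) tends to (Γ(U·α₁)/Γ(U·α₁ + n)) · ∏_{k : (k : ℕ) < U} Γ(α₁ + n_k(z))/Γ(α₁) as α₂ → 0⁺. -/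
open Filter Topology Finset

lemma gammaCont {x : ℝ} (hx : 0 < x) : ContinuousAt Real.Gamma x :=
  (Real.differentiableAt_Gamma fun m => by
    have h : (0:ℝ) ≤ m := Nat.cast_nonneg m
    intro h'; rw [h'] at hx; linarith).continuousAt

lemma id_tendsto : Tendsto (fun a : ℝ => a) (𝓝[>] (0:ℝ)) (𝓝 0) :=
  tendsto_id.mono_right nhdsWithin_le_nhds

lemma ratio_tendsto_zero (m : ℕ) (hm : 1 ≤ m) :
    Tendsto (fun a : ℝ => Real.Gamma (a + m) / Real.Gamma a) (𝓝[>] 0) (𝓝 0) := by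
  have hm' : (0:ℝ) < m := by exact_mod_cast hm
  have h1 : Tendsto (fun a : ℝ => Real.Gamma (a + m)) (𝓝[>] 0) (𝓝 (Real.Gamma m)) := by
    have := (gammaCont hm').tendsto.comp (by simpa using id_tendsto.add_const (m : ℝ))
    simpa [Function.comp_def] using this
  have h2 : Tendsto (fun a : ℝ => Real.Gamma (a + 1)) (𝓝[>] 0) (𝓝 (Real.Gamma 1)) := by
    have := (gammaCont one_pos).tendsto.comp (by simpa using id_tendsto.add_const (1 : ℝ))
    simpa [Function.comp_def] using this
  have h3 : Tendsto (fun a : ℝ => a * (Real.Gamma (a + m) / Real.Gamma (a + 1)))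
      (𝓝[>] 0) (𝓝 (0 * (Real.Gamma m / Real.Gamma 1))) :=
    id_tendsto.mul (h1.div h2 (by simp [Real.Gamma_one]))
  have heq : ∀ᶠ a in 𝓝[>] (0:ℝ),
      a * (Real.Gamma (a + m) / Real.Gamma (a + 1)) = Real.Gamma (a + m) / Real.Gamma a := by
    filter_upwards [self_mem_nhdsWithin] with a ha
    have ha0 : (a:ℝ) ≠ 0 := ne_of_gt ha
    have hg : Real.Gamma a ≠ 0 := (Real.Gamma_pos_of_pos ha).ne'
    rw [Real.Gamma_add_one ha0]
    field_simp
  simpa using h3.congr' heq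

/-- the limiting factor for each component -/
noncomputable def limFac (U : ℕ) (α₁ : ℝ) {n K : ℕ} (z : Fin n → Fin K) (k : Fin K) : ℝ :=
  if (k : ℕ) < U then Real.Gamma (α₁ + (nk z k : ℝ)) / Real.Gamma α₁
  else if nk z k = 0 then 1 else 0

lemma pz_tendsto (K U n : ℕ) (hU1 : 1 ≤ U) (α₁ : ℝ) (hα₁ : 0 < α₁)
    (z : Fin n → Fin K) :
    Tendsto (fun α₂ : ℝ => pz K U n α₁ α₂ z) (𝓝[>] 0)
      (𝓝 ((Real.Gamma ((U : ℝ) * α₁) / Real.Gamma ((U : ℝ) * α₁ + (n : ℝ))) *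
        ∏ k : Fin K, limFac U α₁ z k)) := by
  have hUα : 0 < (U : ℝ) * α₁ := by
    have : (0:ℝ) < U := by exact_mod_cast hU1
    positivity
  have hUαn : 0 < (U : ℝ) * α₁ + (n : ℝ) := by
    have : (0:ℝ) ≤ n := Nat.cast_nonneg n
    linarith
  have harg : Tendsto (fun a : ℝ => (U : ℝ) * α₁ + ((K : ℝ) - (U : ℝ)) * a)
      (𝓝[>] 0) (𝓝 ((U : ℝ) * α₁)) := by
    have hc : Continuous fun a : ℝ => (U : ℝ) * α₁ + ((K : ℝ) - (U : ℝ)) * a := by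
      continuity
    have := (hc.tendsto 0).mono_left (nhdsWithin_le_nhds (s := Set.Ioi (0:ℝ)))
    simpa using this
  have hpre : Tendsto
      (fun a : ℝ => Real.Gamma ((U : ℝ) * α₁ + ((K : ℝ) - (U : ℝ)) * a) /
        Real.Gamma ((U : ℝ) * α₁ + ((K : ℝ) - (U : ℝ)) * a + (n : ℝ)))
      (𝓝[>] 0)
      (𝓝 (Real.Gamma ((U : ℝ) * α₁) / Real.Gamma ((U : ℝ) * α₁ + (n : ℝ)))) := by
    refine Tendsto.div ((gammaCont hUα).tendsto.comp harg)
      ((gammaCont hUαn).tendsto.comp (harg.add_const (n : ℝ)))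
      (Real.Gamma_pos_of_pos hUαn).ne'
  have hprod : Tendsto
      (fun a : ℝ => ∏ k : Fin K,
        Real.Gamma ((if (k : ℕ) < U then α₁ else a) + (nk z k : ℝ)) /
          Real.Gamma (if (k : ℕ) < U then α₁ else a))
      (𝓝[>] 0) (𝓝 (∏ k : Fin K, limFac U α₁ z k)) := by
    refine tendsto_finset_prod _ (fun k _ => ?_)
    by_cases hk : (k : ℕ) < U
    · simp only [hk, if_true, limFac]
      exact tendsto_const_nhds
    · simp only [hk, if_false, limFac]
      by_cases hz : nk z k = 0
      · simp only [hz, if_true, Nat.cast_zero, add_zero]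
        refine Tendsto.congr' ?_ (tendsto_const_nhds : Tendsto _ _ (𝓝 (1:ℝ)))
        filter_upwards [self_mem_nhdsWithin] with a ha
        exact (div_self (Real.Gamma_pos_of_pos ha).ne').symm
      · simp only [hz, if_false]
        exact ratio_tendsto_zero (nk z k) (Nat.one_le_iff_ne_zero.mpr hz)
  simpa [pz] using hpre.mul hprod

theorem stmt_3 (K U n : ℕ) (hK : 1 ≤ K) (hU1 : 1 ≤ U) (hUK : U ≤ K)
    (hn : 1 ≤ n) (α₁ : ℝ) (hα₁ : 0 < α₁) (z : Fin n → Fin K) :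
    ((∃ i, U ≤ (z i : ℕ)) →
      Tendsto (fun α₂ : ℝ => pz K U n α₁ α₂ z) (𝓝[>] 0) (𝓝 0)) ∧
    ((∀ i, (z i : ℕ) < U) →
      Tendsto (fun α₂ : ℝ => pz K U n α₁ α₂ z) (𝓝[>] 0)
        (𝓝 ((Real.Gamma ((U : ℝ) * α₁) / Real.Gamma ((U : ℝ) * α₁ + (n : ℝ))) *
          ∏ k ∈ Finset.univ.filter (fun k : Fin K => (k : ℕ) < U),
            Real.Gamma (α₁ + (nk z k : ℝ)) / Real.Gamma α₁))) := by
  have main := pz_tendsto K U n hU1 α₁ hα₁ z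
  constructor
  · rintro ⟨i, hi⟩
    have hnk : nk z (z i) ≠ 0 := by
      simp only [nk, ← Finset.card_pos, Finset.filter_nonempty_iff]
      exact Finset.card_ne_zero_of_mem (Finset.mem_filter.mpr ⟨Finset.mem_univ i, rfl⟩)
    have hfac : limFac U α₁ z (z i) = 0 := by
      simp [limFac, not_lt.mpr hi, hnk]
    have hzero : ∏ k : Fin K, limFac U α₁ z k = 0 :=
      Finset.prod_eq_zero (Finset.mem_univ (z i)) hfac
    simpa [hzero] using main
  · intro hall
    have hzero : ∀ k : Fin K, ¬ ((k : ℕ) < U) → nk z k = 0 := by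
      intro k hk
      simp only [nk, Finset.card_eq_zero, Finset.filter_eq_empty_iff]
      intro i _ hzi
      exact hk (hzi ▸ hall i)
    have hprod : ∏ k : Fin K, limFac U α₁ z k =
        ∏ k ∈ Finset.univ.filter (fun k : Fin K => (k : ℕ) < U),
          Real.Gamma (α₁ + (nk z k : ℝ)) / Real.Gamma α₁ := by
      rw [Finset.prod_filter]
      refine Finset.prod_congr rfl (fun k _ => ?_)
      by_cases hk : (k : ℕ) < U
      · simp [limFac, hk]
      · simp [limFac, hk, hzero k hk]
    rw [hprod] at main
    exact main
end

section
/- Let U ≥ 1 be an integer and let n₁, …, n_U be natural numbers with Σ_{k} n_k = n. Then the real-valued function x ↦ (Γ(U·x)/Γ(U·x + n)) · ∏_{k=1}^{U} Γ(x + n_k)/Γ(x) tends to U^{−n} as x → ∞ (Tendsto along atTop on ℝ). -/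
open Filter Topology Finset

lemma gamma_nat_add (m : ℕ) {x : ℝ} (hx : 0 < x) :
    Real.Gamma (x + m) = (∏ j ∈ Finset.range m, (x + j)) * Real.Gamma x := by
  induction m with
  | zero => simp
  | succ m ih =>
      have hxm : (0:ℝ) < x + m := by positivity
      have : x + (m + 1 : ℕ) = (x + m) + 1 := by push_cast; ring
      rw [this, Real.Gamma_add_one hxm.ne', ih, Finset.prod_range_succ]
      ring

lemma aux_lim (c : ℝ) (s : Finset ℕ) :
    Tendsto (fun x : ℝ => ∏ j ∈ s, (c + j / x)) atTop (𝓝 (c ^ s.card)) := by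
  have : Tendsto (fun x : ℝ => ∏ j ∈ s, (c + j / x)) atTop (𝓝 (∏ _j ∈ s, c)) := by
    refine tendsto_finset_prod s fun j _ => ?_
    have h0 : Tendsto (fun x : ℝ => (j:ℝ) / x) atTop (𝓝 0) := by
      simpa [div_eq_mul_inv] using tendsto_inv_atTop_zero.const_mul (j:ℝ)
    simpa using tendsto_const_nhds.add h0
  simpa using this

theorem stmt_4 (U : ℕ) (hU : 1 ≤ U) (n : ℕ) (nv : Fin U → ℕ)
    (hsum : ∑ k, nv k = n) :
    Tendsto
      (fun x : ℝ =>
        (Real.Gamma ((U : ℝ) * x) / Real.Gamma ((U : ℝ) * x + (n : ℝ))) *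
          ∏ k : Fin U, Real.Gamma (x + (nv k : ℝ)) / Real.Gamma x)
      atTop (𝓝 (((U : ℝ) ^ n)⁻¹)) := by
  have hU0 : (0:ℝ) < U := by exact_mod_cast hU
  set g : ℝ → ℝ := fun x =>
    (∏ j ∈ Finset.range n, ((U:ℝ) + j / x))⁻¹ *
      ∏ k : Fin U, ∏ j ∈ Finset.range (nv k), (1 + (j:ℝ) / x) with hg
  have hlim : Tendsto g atTop (𝓝 (((U : ℝ) ^ n)⁻¹)) := by
    have h1 := (aux_lim (U:ℝ) (Finset.range n)).inv₀ (by positivity)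
    have h2 : Tendsto (fun x : ℝ => ∏ k : Fin U, ∏ j ∈ Finset.range (nv k), (1 + (j:ℝ) / x))
        atTop (𝓝 1) := by
      have := tendsto_finset_prod (Finset.univ : Finset (Fin U))
        (fun k _ => aux_lim 1 (Finset.range (nv k)))
      simpa using this
    have := h1.mul h2
    simpa [Finset.card_range] using this
  refine hlim.congr' ?_
  filter_upwards [eventually_gt_atTop (0:ℝ)] with x hx
  have hxne : x ≠ 0 := hx.ne'
  have hUx : (0:ℝ) < (U:ℝ) * x := by positivity
  have hΓx : Real.Gamma x ≠ 0 := (Real.Gamma_pos_of_pos hx).ne'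
  have hΓUx : Real.Gamma ((U:ℝ) * x) ≠ 0 := (Real.Gamma_pos_of_pos hUx).ne'
  have e1 : Real.Gamma ((U:ℝ) * x) / Real.Gamma ((U:ℝ) * x + (n:ℝ))
      = (∏ j ∈ Finset.range n, ((U:ℝ) * x + j))⁻¹ := by
    rw [gamma_nat_add n hUx]
    field_simp
  have e2 : ∀ k : Fin U, Real.Gamma (x + (nv k : ℝ)) / Real.Gamma x
      = ∏ j ∈ Finset.range (nv k), (x + j) := by
    intro k
    rw [gamma_nat_add (nv k) hx]
    field_simp
  have inn : ∀ m : ℕ, ∀ c : ℝ, ∏ j ∈ Finset.range m, (c * x + j)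
      = x ^ m * ∏ j ∈ Finset.range m, (c + j / x) := by
    intro m c
    calc ∏ j ∈ Finset.range m, (c * x + j)
        = ∏ j ∈ Finset.range m, (x * (c + j / x)) :=
          Finset.prod_congr rfl fun j _ => by field_simp
      _ = x ^ m * ∏ j ∈ Finset.range m, (c + j / x) := by
          rw [Finset.prod_mul_distrib, Finset.prod_const, Finset.card_range]
  have key1 : ∏ j ∈ Finset.range n, ((U:ℝ) * x + j)
      = x ^ n * ∏ j ∈ Finset.range n, ((U:ℝ) + j / x) := inn n (U:ℝ)
  have key2 : ∏ k : Fin U, ∏ j ∈ Finset.range (nv k), (x + j)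
      = x ^ n * ∏ k : Fin U, ∏ j ∈ Finset.range (nv k), (1 + (j:ℝ) / x) := by
    calc ∏ k : Fin U, ∏ j ∈ Finset.range (nv k), (x + j)
        = ∏ k : Fin U, (x ^ (nv k) * ∏ j ∈ Finset.range (nv k), (1 + (j:ℝ) / x)) := by
          refine Finset.prod_congr rfl fun k _ => ?_
          simpa using inn (nv k) 1
      _ = (∏ k : Fin U, x ^ (nv k)) *
            ∏ k : Fin U, ∏ j ∈ Finset.range (nv k), (1 + (j:ℝ) / x) :=
          Finset.prod_mul_distrib
      _ = x ^ n * ∏ k : Fin U, ∏ j ∈ Finset.range (nv k), (1 + (j:ℝ) / x) := by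
          rw [Finset.prod_pow_eq_pow_sum, hsum]
  have hxn : x ^ n ≠ 0 := pow_ne_zero _ hxne
  rw [hg]
  simp only [e1, e2, key1, key2]
  rw [mul_inv]
  field_simp
end

section
/- (Remark 2) Fix K ≥ 2, n ≥ 1 and set U = 1. There exists a function M : ℝ → ℝ such that for every α₂ > 0, Pr(K⁺ = 1 | K, n, α₁, α₂) tends to M α₂ as α₁ → 0⁺, and M α₂ tends to 1 as α₂ → 0⁺. That is, with U = 1 and α₂ fixed at a small value, letting α₁ → 0 drives the model to a single occupied component: lim_{α₂→0⁺} lim_{α₁→0⁺} Pr(K⁺ = 1 | K, n, α₁, α₂) = 1. -/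
open Filter Topology Finset

/-!
A single occupied component means a constant allocation, and `Γ(x + n) / Γ(x)` is the rising
factorial `x⁽ⁿ⁾`, so `Pr(K⁺ = 1) = (U α₁⁽ⁿ⁾ + (K - U) α₂⁽ⁿ⁾) / A⁽ⁿ⁾`: a rational function of `α₁`
whose denominator stays positive at `α₁ = 0`. As `0⁽ⁿ⁾ = 0`, the limit `α₁ → 0⁺` is
`(K - U) α₂⁽ⁿ⁾ / ((K - U) α₂)⁽ⁿ⁾`. Cancelling the common factor `(K - U) α₂` leaves
`(α₂ + 1)⁽ⁿ⁻¹⁾ / ((K - U) α₂ + 1)⁽ⁿ⁻¹⁾`, which is continuous and equal to `1` at `α₂ = 0`.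
-/
theorem ascPochhammer_succ_left_eval {S : Type*} [CommSemiring S] (m : ℕ) (x : S) :
    (ascPochhammer S (m + 1)).eval x = x * (ascPochhammer S m).eval (x + 1) := by
  simp [ascPochhammer_succ_left]

theorem Real.Gamma_add_nat_div_Gamma_eq {x : ℝ} (hx : 0 < x) (n : ℕ) :
    Real.Gamma (x + n) / Real.Gamma x = (ascPochhammer ℝ n).eval x := by
  induction n with
  | zero => simp [(Real.Gamma_pos_of_pos hx).ne']
  | succ m ih =>
    rw [Nat.cast_succ, ← add_assoc, Real.Gamma_add_one (by positivity), mul_div_assoc, ih,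
      ascPochhammer_succ_eval, mul_comm]

theorem tendsto_mul_ascPochhammer_div {n : ℕ} (hn : 0 < n) {c : ℝ} (hc : 0 < c) :
    Tendsto (fun x => c * (ascPochhammer ℝ n).eval x / (ascPochhammer ℝ n).eval (c * x))
      (𝓝[>] 0) (𝓝 1) := by
  obtain ⟨m, rfl⟩ := Nat.exists_eq_add_one_of_ne_zero hn.ne'
  let f := fun x : ℝ => (ascPochhammer ℝ m).eval (x + 1) / (ascPochhammer ℝ m).eval (c * x + 1)
  have hcancel : f =ᶠ[𝓝[>] 0] fun x =>
      c * (ascPochhammer ℝ (m + 1)).eval x / (ascPochhammer ℝ (m + 1)).eval (c * x) := by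
    filter_upwards [self_mem_nhdsWithin] with x (hx : 0 < x)
    dsimp only [f]
    rw [ascPochhammer_succ_left_eval, ascPochhammer_succ_left_eval]
    field_simp
  have hP1 : (ascPochhammer ℝ m).eval (c * 0 + 1) ≠ 0 := (ascPochhammer_pos m _ (by positivity)).ne'
  have hf0 : f 0 = 1 := by simpa [f] using div_self hP1
  have hcont : ContinuousAt f 0 := ContinuousAt.div (by fun_prop) (by fun_prop) hP1
  exact hf0 ▸ (tendsto_nhdsWithin_of_tendsto_nhds hcont.tendsto).congr' hcancel

theorem Fin.sum_ite_val_lt {M : Type*} [AddCommMonoid M] {K U : ℕ} (hU : U ≤ K) (a b : M) :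
    ∑ k : Fin K, (if (k : ℕ) < U then a else b) = U • a + (K - U) • b := by
  have hcard : #{k : Fin K | (k : ℕ) < U} = U := by
    rw [Fin.card_filter_val_lt, min_eq_right hU]
  have hcard' : #{k : Fin K | ¬ (k : ℕ) < U} = K - U := by
    rw [filter_not, card_sdiff_of_subset (filter_subset _ _), hcard, card_univ, Fintype.card_fin]
  rw [sum_ite, Finset.sum_const, Finset.sum_const, hcard, hcard']

theorem nk_const {n K : ℕ} (k j : Fin K) :
    nk (fun _ : Fin n => k) j = if j = k then n else 0 := by
  by_cases h : j = k
  · simp [nk, h]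
  · simp [nk, h, Ne.symm h]

theorem Kplus_eq_one_iff {n K : ℕ} (hn : 0 < n) (z : Fin n → Fin K) :
    Kplus z = 1 ↔ ∃ k, z = fun _ => k := by
  have hne : (univ : Finset (Fin n)).Nonempty := ⟨⟨0, hn⟩, mem_univ _⟩
  constructor
  · intro h
    obtain ⟨k, hk⟩ := card_eq_one.mp h
    exact ⟨k, funext fun i => mem_singleton.mp (hk ▸ mem_image_of_mem z (mem_univ i))⟩
  · rintro ⟨k, rfl⟩
    simp [Kplus, image_const hne]

section Dirichlet

variable {K U n : ℕ} {α₁ α₂ : ℝ}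

theorem pz_const (h₁ : 0 < α₁) (h₂ : 0 < α₂) (k : Fin K) :
    pz K U n α₁ α₂ (fun _ => k) =
      Real.Gamma (U * α₁ + (K - U) * α₂) / Real.Gamma (U * α₁ + (K - U) * α₂ + n) *
        (ascPochhammer ℝ n).eval (if (k : ℕ) < U then α₁ else α₂) := by
  have hα : ∀ j : Fin K, 0 < if (j : ℕ) < U then α₁ else α₂ := fun j => by split_ifs <;> assumption
  rw [pz, prod_eq_single k, nk_const, if_pos rfl, Real.Gamma_add_nat_div_Gamma_eq (hα k)]
  · intro j _ hj
    rw [nk_const, if_neg hj, Nat.cast_zero, add_zero, div_self (Real.Gamma_pos_of_pos (hα j)).ne']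
  · simp

theorem prKplus_one_eq (hU₀ : 0 < U) (hU : U ≤ K) (hn : 0 < n) (h₁ : 0 < α₁) (h₂ : 0 < α₂) :
    prKplus K U n α₁ α₂ 1 =
      (U * (ascPochhammer ℝ n).eval α₁ + (K - U) * (ascPochhammer ℝ n).eval α₂) /
        (ascPochhammer ℝ n).eval (U * α₁ + (K - U) * α₂) := by
  have hA : 0 < (U : ℝ) * α₁ + (K - U) * α₂ := by
    have : (U : ℝ) ≤ K := by exact_mod_cast hU
    have : (0 : ℝ) < U := by exact_mod_cast hU₀
    positivity
  have hfilter : univ.filter (fun z : Fin n → Fin K => Kplus z = 1) =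
      univ.image (fun k : Fin K => fun _ : Fin n => k) := by
    ext z
    simp [Kplus_eq_one_iff hn, eq_comm]
  rw [prKplus, hfilter, sum_image fun a _ b _ h => congrFun h ⟨0, hn⟩]
  simp_rw [pz_const h₁ h₂]
  rw [← mul_sum]
  simp_rw [apply_ite (ascPochhammer ℝ n).eval]
  rw [Fin.sum_ite_val_lt hU, nsmul_eq_mul, nsmul_eq_mul, Nat.cast_sub hU, ← inv_div,
    Real.Gamma_add_nat_div_Gamma_eq hA, inv_mul_eq_div]

theorem tendsto_prKplus_one_nhdsGT_zero (hU₀ : 0 < U) (hUK : U < K)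
    (hn : 0 < n) (h₂ : 0 < α₂) :
    Tendsto (fun α₁ => prKplus K U n α₁ α₂ 1) (𝓝[>] 0)
      (𝓝 ((K - U) * (ascPochhammer ℝ n).eval α₂ / (ascPochhammer ℝ n).eval ((K - U) * α₂))) := by
  have hc : (0 : ℝ) < K - U := sub_pos.mpr (by exact_mod_cast hUK)
  let f := fun α₁ : ℝ => (U * (ascPochhammer ℝ n).eval α₁ + (K - U) * (ascPochhammer ℝ n).eval α₂) /
    (ascPochhammer ℝ n).eval (U * α₁ + (K - U) * α₂)
  have hf : f =ᶠ[𝓝[>] 0] fun α₁ => prKplus K U n α₁ α₂ 1 := by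
    filter_upwards [self_mem_nhdsWithin] with α₁ (h₁ : 0 < α₁)
    exact (prKplus_one_eq hU₀ hUK.le hn h₁ h₂).symm
  have hden : (ascPochhammer ℝ n).eval (U * 0 + (K - U) * α₂) ≠ 0 :=
    (ascPochhammer_pos n _ (by positivity)).ne'
  have hf0 :
      f 0 = (K - U) * (ascPochhammer ℝ n).eval α₂ / (ascPochhammer ℝ n).eval ((K - U) * α₂) := by
    simp [f, hn.ne']
  have hcont : ContinuousAt f 0 := ContinuousAt.div (by fun_prop) (by fun_prop) hden
  exact hf0 ▸ (tendsto_nhdsWithin_of_tendsto_nhds hcont.tendsto).congr' hf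

end Dirichlet

theorem stmt_8 (K n : ℕ) (hK : 2 ≤ K) (hn : 1 ≤ n) :
    ∃ M : ℝ → ℝ,
      (∀ α₂ : ℝ, 0 < α₂ →
        Tendsto (fun α₁ : ℝ => prKplus K 1 n α₁ α₂ 1) (𝓝[>] 0) (𝓝 (M α₂))) ∧
      Tendsto M (𝓝[>] 0) (𝓝 1) := by
  have hc : (0 : ℝ) < K - 1 := by
    have : (2 : ℝ) ≤ K := by exact_mod_cast hK
    linarith
  refine ⟨fun x => (K - 1) * (ascPochhammer ℝ n).eval x / (ascPochhammer ℝ n).eval ((K - 1) * x),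
    fun α₂ h₂ => ?_, tendsto_mul_ascPochhammer_div hn hc⟩
  simpa using tendsto_prKplus_one_nhdsGT_zero one_pos hK hn h₂
end

section
/- For every K ≥ 1 and n ≥ 1, under the symmetric Dirichlet parameter vector β k = a for all k (a > 0), the probability that all observations occupy a single component satisfies Σ_{z : Fin n → Fin K, K⁺(z) = 1} (Γ(K·a)/Γ(K·a + n)) · ∏_{k ∈ Fin K} Γ(a + n_k(z))/Γ(a) = K · Γ(K·a) · Γ(a + n) / (Γ(K·a + n) · Γ(a)), and this quantity tends to 1 as a → 0⁺ (one-sided limit within (0, ∞)). Thus a symmetric Dirichlet prior with vanishing concentration parameter shrinks the number of occupied components to one. -/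
open Filter Topology Finset

/-- Probability that all observations occupy a single component under the
symmetric Dirichlet(a) prior. -/
noncomputable def prOne (K n : ℕ) (a : ℝ) : ℝ :=
  ∑ z ∈ Finset.univ.filter (fun z : Fin n → Fin K => Kplus z = 1),
    (Real.Gamma ((K : ℝ) * a) / Real.Gamma ((K : ℝ) * a + (n : ℝ))) *
      ∏ k : Fin K, Real.Gamma (a + (nk z k : ℝ)) / Real.Gamma a

theorem stmt_9 (K n : ℕ) (hK : 1 ≤ K) (hn : 1 ≤ n) :
    (∀ a : ℝ, 0 < a →
      prOne K n a =
        (K : ℝ) * Real.Gamma ((K : ℝ) * a) * Real.Gamma (a + (n : ℝ)) /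
          (Real.Gamma ((K : ℝ) * a + (n : ℝ)) * Real.Gamma a)) ∧
    Tendsto (fun a : ℝ => prOne K n a) (𝓝[>] 0) (𝓝 1) := by
  have hi0 : (0 : ℕ) < n := hn
  have key : ∀ a : ℝ, 0 < a →
      prOne K n a =
        (K : ℝ) * Real.Gamma ((K : ℝ) * a) * Real.Gamma (a + (n : ℝ)) /
          (Real.Gamma ((K : ℝ) * a + (n : ℝ)) * Real.Gamma a) := by
    intro a ha
    have hGa : Real.Gamma a ≠ 0 := (Real.Gamma_pos_of_pos ha).ne'
    have hKa : (0 : ℝ) < (K : ℝ) * a := by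
      apply mul_pos _ ha
      exact_mod_cast Nat.lt_of_lt_of_le Nat.zero_lt_one hK
    have hGKan : Real.Gamma ((K : ℝ) * a + (n : ℝ)) ≠ 0 := by
      refine (Real.Gamma_pos_of_pos ?_).ne'
      positivity
    have hset : Finset.univ.filter (fun z : Fin n → Fin K => Kplus z = 1)
        = Finset.univ.image (fun c : Fin K => (fun _ : Fin n => c)) := by
      ext z
      simp only [mem_filter, mem_univ, true_and, mem_image]
      constructor
      · intro hz
        obtain ⟨c, hc⟩ := Finset.card_eq_one.mp hz
        refine ⟨c, ?_⟩
        funext i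
        have : z i ∈ Finset.univ.image z := mem_image_of_mem _ (mem_univ i)
        rw [hc, mem_singleton] at this
        exact this.symm
      · rintro ⟨c, rfl⟩
        have : Finset.univ.image (fun _ : Fin n => c) = {c} := by
          apply Finset.eq_singleton_iff_unique_mem.mpr
          refine ⟨mem_image_of_mem _ (mem_univ (⟨0, hi0⟩ : Fin n)), ?_⟩
          intro x hx
          simp only [mem_image, mem_univ, true_and] at hx
          obtain ⟨i, hi⟩ := hx
          exact hi.symm
        simp [Kplus, this]
    have hinj : Set.InjOn (fun c : Fin K => (fun _ : Fin n => c))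
        (Finset.univ : Finset (Fin K)) := by
      intro c _ c' _ h
      exact congrFun h ⟨0, hi0⟩
    rw [prOne, hset, Finset.sum_image (fun x hx y hy h => hinj hx hy h)]
    have hterm : ∀ c : Fin K,
        (∏ k : Fin K, Real.Gamma (a + (nk (fun _ : Fin n => c) k : ℝ)) / Real.Gamma a)
          = Real.Gamma (a + (n : ℝ)) / Real.Gamma a := by
      intro c
      rw [Finset.prod_eq_single_of_mem c (mem_univ c)]
      · have : nk (fun _ : Fin n => c) c = n := by
          simp [nk]
        rw [this]
      · intro k _ hk
        have : nk (fun _ : Fin n => c) k = 0 := by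
          simp [nk, Ne.symm hk]
        rw [this]
        simp [hGa]
    simp only [hterm]
    rw [Finset.sum_const, Finset.card_univ, Fintype.card_fin, nsmul_eq_mul]
    field_simp
  refine ⟨key, ?_⟩
  -- the limit
  have hev : ∀ᶠ a in 𝓝[>] (0:ℝ), prOne K n a =
      Real.Gamma ((K : ℝ) * a + 1) * Real.Gamma (a + (n : ℝ)) /
        (Real.Gamma ((K : ℝ) * a + (n : ℝ)) * Real.Gamma (a + 1)) := by
    filter_upwards [self_mem_nhdsWithin] with a (ha : 0 < a)
    rw [key a ha]
    have hKpos : (0 : ℝ) < (K : ℝ) := by exact_mod_cast Nat.lt_of_lt_of_le Nat.zero_lt_one hK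
    have hKa : (K : ℝ) * a ≠ 0 := by positivity
    rw [Real.Gamma_add_one hKa, Real.Gamma_add_one ha.ne']
    have hGa : Real.Gamma a ≠ 0 := (Real.Gamma_pos_of_pos ha).ne'
    have hGKan : Real.Gamma ((K : ℝ) * a + (n : ℝ)) ≠ 0 := by
      refine (Real.Gamma_pos_of_pos ?_).ne'
      have : (0:ℝ) < (n:ℝ) := by exact_mod_cast hi0
      positivity
    field_simp
  have hn_ne : ∀ m : ℕ, (n : ℝ) ≠ -m := by
    intro m
    have h1 : (1:ℝ) ≤ (n:ℝ) := by exact_mod_cast hn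
    have h2 : (0:ℝ) ≤ (m:ℝ) := m.cast_nonneg
    intro h; linarith [h ▸ h1]
  have h1_ne : ∀ m : ℕ, (1 : ℝ) ≠ -m := by
    intro m
    have h2 : (0:ℝ) ≤ (m:ℝ) := m.cast_nonneg
    intro h; linarith [h]
  have cG1 : ContinuousAt Real.Gamma 1 := (Real.differentiableAt_Gamma h1_ne).continuousAt
  have cGn : ContinuousAt Real.Gamma (n:ℝ) := (Real.differentiableAt_Gamma hn_ne).continuousAt
  have c1 : ContinuousAt (fun a : ℝ => Real.Gamma ((K : ℝ) * a + 1)) 0 := by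
    apply ContinuousAt.comp (g := Real.Gamma) (f := fun a : ℝ => (K : ℝ) * a + 1)
    · have h0 : (K : ℝ) * 0 + 1 = 1 := by ring
      rw [h0]; exact cG1
    · fun_prop
  have c2 : ContinuousAt (fun a : ℝ => Real.Gamma (a + (n : ℝ))) 0 := by
    apply ContinuousAt.comp (g := Real.Gamma) (f := fun a : ℝ => a + (n : ℝ))
    · have h0 : (0:ℝ) + (n:ℝ) = (n:ℝ) := by ring
      rw [h0]; exact cGn
    · fun_prop
  have c3 : ContinuousAt (fun a : ℝ => Real.Gamma ((K : ℝ) * a + (n : ℝ))) 0 := by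
    apply ContinuousAt.comp (g := Real.Gamma) (f := fun a : ℝ => (K : ℝ) * a + (n : ℝ))
    · have h0 : (K : ℝ) * 0 + (n:ℝ) = (n:ℝ) := by ring
      rw [h0]; exact cGn
    · fun_prop
  have c4 : ContinuousAt (fun a : ℝ => Real.Gamma (a + 1)) 0 := by
    apply ContinuousAt.comp (g := Real.Gamma) (f := fun a : ℝ => a + 1)
    · have h0 : (0:ℝ) + 1 = 1 := by ring
      rw [h0]; exact cG1
    · fun_prop
  have hGn_pos : 0 < Real.Gamma (n:ℝ) := by
    apply Real.Gamma_pos_of_pos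
    exact_mod_cast hi0
  have hden : Real.Gamma ((K : ℝ) * 0 + (n : ℝ)) * Real.Gamma ((0:ℝ) + 1) ≠ 0 := by
    rw [mul_zero, zero_add, zero_add, Real.Gamma_one, mul_one]
    exact hGn_pos.ne'
  have cAll : ContinuousAt (fun a : ℝ =>
      Real.Gamma ((K : ℝ) * a + 1) * Real.Gamma (a + (n : ℝ)) /
        (Real.Gamma ((K : ℝ) * a + (n : ℝ)) * Real.Gamma (a + 1))) 0 :=
    ContinuousAt.div (c1.mul c2) (c3.mul c4) hden
  have htend : Tendsto (fun a : ℝ =>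
      Real.Gamma ((K : ℝ) * a + 1) * Real.Gamma (a + (n : ℝ)) /
        (Real.Gamma ((K : ℝ) * a + (n : ℝ)) * Real.Gamma (a + 1))) (𝓝 0) (𝓝 1) := by
    have h := cAll.tendsto
    simp only [mul_zero, zero_add, Real.Gamma_one, one_mul, mul_one] at h
    rwa [div_self hGn_pos.ne'] at h
  exact Tendsto.congr' (hev.mono fun a h => h.symm) (htend.mono_left nhdsWithin_le_nhds)
end
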